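/- arXiv:2101.08177 — 11 statements merged into one kernel-verified Lean document; each statement's English description precedes it below -/
import Mathlib

section
/- For all integers k ≥ 1 and r ≥ 1, if H is an m×(k+r) binary matrix that is BDC(k,r,k+r), then m ≥ C(k+r, k) (the binomial coefficient choose(k+r, k)). -/
/-- Boolean sum (entrywise OR) of the columns of `H` indexed by the finite set `T`. -/
def boolSum {m n : ℕ} (H : Fin m → Fin n → Bool) (T : Finset (Fin n)) : Fin m → Bool :=
  fun i => decide (∃ j ∈ T, H i j = true)

/-- `H` has row weight `r`: every row of `H` contains at least `r` ones. -/
def HasRowWeight {m n : ℕ} (H : Fin m → Fin n → Bool) (r : ℕ) : Prop :=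
  ∀ i, r ≤ (Finset.univ.filter fun j => H i j = true).card

/-- `H` is a backdoor detection code BDC(k,r,n): no zero column, row weight `r`,
and no `k̄`-sum (Boolean sum of a nonempty set of at most `k` columns) equals the
all-ones vector. -/
def IsBDC {m n : ℕ} (k r : ℕ) (H : Fin m → Fin n → Bool) : Prop :=
  (∀ j, ∃ i, H i j = true) ∧
  HasRowWeight H r ∧
  (∀ T : Finset (Fin n), T.Nonempty → T.card ≤ k → boolSum H T ≠ fun _ => true)

/-- `H` is a backdoor correction code BCC(k,r,n): it is BDC(k,r,n) and the entrywise
XOR of any two `k̄`-sums is never the all-ones vector. -/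
def IsBCC {m n : ℕ} (k r : ℕ) (H : Fin m → Fin n → Bool) : Prop :=
  IsBDC k r H ∧
  ∀ T₁ T₂ : Finset (Fin n), T₁.Nonempty → T₁.card ≤ k → T₂.Nonempty → T₂.card ≤ k →
    (fun i => xor (boolSum H T₁ i) (boolSum H T₂ i)) ≠ fun _ => true

/-- `H` is `k̄`-separable: distinct nonempty sets of at most `k` columns have distinct
Boolean sums. -/
def IsKSeparable {m n : ℕ} (k : ℕ) (H : Fin m → Fin n → Bool) : Prop :=
  ∀ T₁ T₂ : Finset (Fin n), T₁.Nonempty → T₁.card ≤ k → T₂.Nonempty → T₂.card ≤ k →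
    boolSum H T₁ = boolSum H T₂ → T₁ = T₂

/-- `H` is a backdoor tracking code BTC(k,r,n): it is BCC(k,r,n) and `k̄`-separable. -/
def IsBTC {m n : ℕ} (k r : ℕ) (H : Fin m → Fin n → Bool) : Prop :=
  IsBCC k r H ∧ IsKSeparable k H

/-- Lower bound for minimal backdoor detection codes: any `m × (k+r)` binary matrix
that is BDC(k,r,k+r) has at least `C(k+r, k)` rows. -/
theorem stmt1 (k r m : ℕ) (hk : 1 ≤ k) (hr : 1 ≤ r)
    (H : Fin m → Fin (k + r) → Bool) (hH : IsBDC k r H) :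
    (k + r).choose k ≤ m := by
  classical
  obtain ⟨hnz, hrw, hsum⟩ := hH
  have key : ∀ T : Finset (Fin (k+r)), T.card = k → ∃ i, ∀ j ∈ T, H i j = false := by
    intro T hT
    have hne : T.Nonempty := Finset.card_pos.mp (by omega)
    have hs := hsum T hne (le_of_eq hT)
    have hex : ∃ i, boolSum H T i ≠ true := by
      by_contra h
      push_neg at h
      exact hs (funext fun i => by simpa using h i)
    obtain ⟨i, hi⟩ := hex
    refine ⟨i, fun j hj => ?_⟩
    simp only [boolSum, ne_eq, decide_eq_true_eq, not_exists, not_and] at hi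
    simpa using hi j hj
  obtain ⟨i₀, _⟩ := hnz ⟨0, by omega⟩
  set f : Finset (Fin (k+r)) → Fin m := fun T =>
    if h : T.card = k then (key T h).choose else i₀ with hfdef
  have hf : ∀ T (h : T.card = k), ∀ j ∈ T, H (f T) j = false := by
    intro T h
    simp only [hfdef, dif_pos h]
    exact (key T h).choose_spec
  calc (k+r).choose k
      = ((Finset.univ : Finset (Fin (k+r))).powersetCard k).card := by
        simp [Finset.card_powersetCard]
    _ ≤ (Finset.univ : Finset (Fin m)).card := by
        apply Finset.card_le_card_of_injOn f (fun _ _ => Finset.mem_univ _)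
        intro T₁ h₁ T₂ h₂ heq
        rw [Finset.mem_coe, Finset.mem_powersetCard_univ] at h₁ h₂
        set i := f T₁ with hi
        have hz : (Finset.univ.filter fun j => H i j = false).card ≤ k := by
          have hrwi := hrw i
          have hcc := Finset.card_filter_add_card_filter_not
            (s := (Finset.univ : Finset (Fin (k+r))))
            (p := fun j : Fin (k+r) => H i j = true)
          have hcu : (Finset.univ : Finset (Fin (k+r))).card = k + r := by simp
          have hfe : (Finset.univ.filter fun j : Fin (k+r) => ¬ H i j = true)
              = (Finset.univ.filter fun j => H i j = false) := by
            apply Finset.filter_congr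
            intro j _
            simp
          rw [hfe] at hcc
          omega
        have hs₁ : T₁ ⊆ Finset.univ.filter fun j => H i j = false :=
          fun j hj => Finset.mem_filter.mpr ⟨Finset.mem_univ _, hf T₁ h₁ j hj⟩
        have hs₂ : T₂ ⊆ Finset.univ.filter fun j => H i j = false := by
          intro j hj
          refine Finset.mem_filter.mpr ⟨Finset.mem_univ _, ?_⟩
          show H i j = false
          rw [heq]
          exact hf T₂ h₂ j hj
        have e₁ : T₁ = Finset.univ.filter fun j => H i j = false :=
          Finset.eq_of_subset_of_card_le hs₁ (by omega)
        have e₂ : T₂ = Finset.univ.filter fun j => H i j = false :=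
          Finset.eq_of_subset_of_card_le hs₂ (by omega)
        rw [e₁, e₂]
    _ = m := by simp
end

section
/- For all integers k ≥ 1 and r ≥ 1, the recursively constructed matrix H^(k,r) has exactly C(k+r,k) rows and k+r columns, every row of H^(k,r) contains exactly k zeros (equivalently exactly r ones), and H^(k,r) is BDC(k,r,k+r). -/
/-- The recursively constructed minimal code `H^(k,r)` (entries given on natural-number
indices; the genuine matrix is its restriction to `Fin ((k+r).choose k) × Fin (k+r)`).
`Hmat k r i j` is the entry in row `i`, column `j`. -/
def Hmat : ℕ → ℕ → ℕ → ℕ → Bool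
  | _, 0, _, _ => false
  | 0, _ + 1, _, _ => false
  | _ + 1, 1, i, j => decide (i = j)
  | 1, r + 2, i, j =>
      if j = 0 then decide (i < r + 2)
      else if i < r + 2 then Hmat 1 (r + 1) i (j - 1)
      else true
  | k + 2, r + 2, i, j =>
      if j = 0 then decide (i < (k + r + 3).choose (k + 2))
      else if i < (k + r + 3).choose (k + 2) then Hmat (k + 2) (r + 1) i (j - 1)
      else Hmat (k + 1) (r + 2) (i - (k + r + 3).choose (k + 2)) (j - 1)
  termination_by k r _ _ => (k, r)



lemma card_filter_shift (n : ℕ) (p : ℕ → Prop) [DecidablePred p] :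
    ((Finset.range (n+1)).filter p).card =
    (if p 0 then 1 else 0) + ((Finset.range n).filter (fun j => p (j+1))).card := by
  rw [Finset.card_filter, Finset.card_filter, Finset.sum_range_succ', add_comm]

lemma fin_filter_card (n : ℕ) (p : ℕ → Prop) [DecidablePred p] :
    (Finset.univ.filter fun j : Fin n => p j.val).card = ((Finset.range n).filter p).card := by
  apply Finset.card_nbij (fun a => a.val)
  · intro a ha; simp at ha ⊢; exact ha
  · intro a ha b hb h; exact Fin.val_injective h
  · intro a ha; simp at ha ⊢; exact ⟨⟨a, ha.1⟩, ha.2, rfl⟩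

lemma row_count : ∀ (N k r : ℕ), k + r = N → 1 ≤ k → 1 ≤ r →
    ∀ i, i < (k+r).choose k →
    ((Finset.range (k+r)).filter fun j => Hmat k r i j = false).card = k := by
  intro N
  induction N using Nat.strong_induction_on with
  | _ N ih =>
  intro k r hN hk hr i hi
  match k, r, hk, hr with
  | k+1, 1, _, _ =>
      have hi' : i < k + 2 := by
        simp [Nat.choose_succ_self_right] at hi; omega
      have hset : ((Finset.range (k+1+1)).filter fun j => Hmat (k+1) 1 i j = false)
          = (Finset.range (k+2)).erase i := by
        ext j
        simp only [Finset.mem_filter, Finset.mem_erase, Finset.mem_range]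
        rw [Hmat]
        simp only [decide_eq_false_iff_not]
        constructor
        · rintro ⟨h1, h2⟩; exact ⟨fun h => h2 h.symm, h1⟩
        · rintro ⟨h1, h2⟩; exact ⟨h2, fun h => h1 h.symm⟩
      rw [hset, Finset.card_erase_of_mem (by simpa using hi')]
      simp
  | 1, r+2, _, _ =>
      have hcols : 1 + (r + 2) = (r + 2) + 1 := by omega
      have hi' : i < r + 3 := by rw [Nat.choose_one_right] at hi; omega
      rw [hcols, card_filter_shift (r+2) (fun j => Hmat 1 (r+2) i j = false)]
      have h0 : Hmat 1 (r+2) i 0 = decide (i < r + 2) := by rw [Hmat]; simp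
      by_cases hir : i < r + 2
      · have hsh : ∀ j, Hmat 1 (r+2) i (j+1) = Hmat 1 (r+1) i j := by
          intro j; rw [Hmat]; simp [hir]
        have hIH := ih (1 + (r+1)) (by omega) 1 (r+1) rfl (by omega) (by omega) i
          (by rw [Nat.choose_one_right]; omega)
        rw [show (1 : ℕ) + (r + 1) = r + 2 by omega] at hIH
        simp only [hsh, h0]
        rw [hIH]
        simp [hir]
      · have hsh : ∀ j, Hmat 1 (r+2) i (j+1) = true := by
          intro j; rw [Hmat]; simp [hir]
        simp [hsh, h0, hir]
  | k+2, r+2, _, _ =>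
      set c := (k + r + 3).choose (k + 2) with hc
      have hcols : (k + 2) + (r + 2) = (k + r + 3) + 1 := by omega
      have htot : ((k+2) + (r+2)).choose (k+2) = (k+r+3).choose (k+1) + c := by
        rw [hcols, Nat.choose_succ_succ']
      have h0 : Hmat (k+2) (r+2) i 0 = decide (i < c) := by rw [Hmat]; simp [hc]
      rw [hcols, card_filter_shift (k+r+3) (fun j => Hmat (k+2) (r+2) i j = false)]
      by_cases hic : i < c
      · have hsh : ∀ j, Hmat (k+2) (r+2) i (j+1) = Hmat (k+2) (r+1) i j := by
          intro j; rw [Hmat]; simp [hc, show i < (k + r + 3).choose (k + 2) from hic]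
        have hIH := ih ((k+2) + (r+1)) (by omega) (k+2) (r+1) rfl (by omega) (by omega) i
          (by rw [show (k+2) + (r+1) = k + r + 3 by omega]; exact hic)
        rw [show (k+2) + (r+1) = k + r + 3 by omega] at hIH
        simp only [hsh, h0]
        rw [hIH]
        simp [hic]
      · have hsh : ∀ j, Hmat (k+2) (r+2) i (j+1)
            = Hmat (k+1) (r+2) (i - c) j := by
          intro j; rw [Hmat]; simp [hc, show ¬ i < (k + r + 3).choose (k + 2) from hic]
        have hilt : i - c < (k+r+3).choose (k+1) := by
          rw [htot] at hi; omega
        have hIH := ih ((k+1) + (r+2)) (by omega) (k+1) (r+2) rfl (by omega) (by omega) (i - c)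
          (by rw [show (k+1) + (r+2) = k + r + 3 by omega]; exact hilt)
        rw [show (k+1) + (r+2) = k + r + 3 by omega] at hIH
        simp only [hsh, h0]
        rw [hIH]
        simp [hic]
        omega

lemma cover : ∀ (N k r : ℕ), k + r = N → 1 ≤ k → 1 ≤ r →
    ∀ S : Finset ℕ, (∀ j ∈ S, j < k + r) → S.card = k →
    ∃ i, i < (k+r).choose k ∧ ∀ j ∈ S, Hmat k r i j = false := by
  intro N
  induction N using Nat.strong_induction_on with
  | _ N ih =>
  intro k r hN hk hr S hSb hSc
  match k, r, hk, hr with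
  | k+1, 1, _, _ =>
      have hns : ¬ (Finset.range (k+2)) ⊆ S := by
        intro h
        have := Finset.card_le_card h
        simp [hSc] at this
      obtain ⟨i, hir, hiS⟩ := Finset.not_subset.mp hns
      refine ⟨i, by have := Finset.mem_range.mp hir; simp [Nat.choose_succ_self_right]; omega, ?_⟩
      intro j hj
      rw [Hmat]
      simp only [decide_eq_false_iff_not]
      intro h; exact hiS (h ▸ hj)
  | 1, r+2, _, _ =>
      obtain ⟨j, hj⟩ := Finset.card_eq_one.mp hSc
      subst hj
      have hjb : j < r + 3 := by
        have := hSb j (Finset.mem_singleton_self j); omega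
      match j with
      | 0 =>
          refine ⟨r+2, by simp [Nat.choose_one_right], ?_⟩
          intro j hj; simp at hj; subst hj
          rw [Hmat]; simp
      | j+1 =>
          obtain ⟨i, hilt, hz⟩ := ih (1 + (r+1)) (by omega) 1 (r+1) rfl (by omega) (by omega)
            {j} (by intro x hx; simp at hx; omega) (by simp)
          have hir : i < r + 2 := by rw [Nat.choose_one_right] at hilt; omega
          refine ⟨i, by rw [Nat.choose_one_right]; omega, ?_⟩
          intro x hx; simp at hx; subst hx
          rw [Hmat]; simp only [if_neg (by omega : ¬ j + 1 = 0), if_pos hir, Nat.add_sub_cancel]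
          exact hz j (Finset.mem_singleton_self j)
  | k+2, r+2, _, _ =>
      set c := (k + r + 3).choose (k + 2) with hc
      have htot : ((k+2) + (r+2)).choose (k+2) = (k+r+3).choose (k+1) + c := by
        rw [show (k+2)+(r+2) = (k+r+3)+1 by omega, Nat.choose_succ_succ']
      by_cases h0 : 0 ∈ S
      · set S' := (S.erase 0).image (· - 1) with hS'
        have hinj : Set.InjOn (· - 1) (S.erase 0) := by
          intro a ha b hb hab
          have ha0 : a ≠ 0 := (Finset.mem_erase.mp ha).1
          have hb0 : b ≠ 0 := (Finset.mem_erase.mp hb).1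
          simp only at hab; omega
        have hcard : S'.card = k + 1 := by
          rw [hS', Finset.card_image_of_injOn hinj, Finset.card_erase_of_mem h0, hSc]
          omega
        have hb : ∀ x ∈ S', x < (k+1) + (r+2) := by
          intro x hx
          simp only [hS', Finset.mem_image, Finset.mem_erase] at hx
          obtain ⟨a, ⟨ha0, haS⟩, hax⟩ := hx
          have := hSb a haS; omega
        obtain ⟨i', hilt, hz⟩ := ih ((k+1) + (r+2)) (by omega) (k+1) (r+2) rfl (by omega)
          (by omega) S' hb hcard
        rw [show (k+1)+(r+2) = k+r+3 by omega] at hilt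
        refine ⟨c + i', by rw [htot]; omega, ?_⟩
        intro j hj
        match j with
        | 0 => rw [Hmat]; simp [hc]
        | j+1 =>
            rw [Hmat]
            simp only [Nat.add_sub_cancel, if_neg (by omega : ¬ j + 1 = 0),
              if_neg (by omega : ¬ c + i' < (k + r + 3).choose (k + 2))]
            rw [Nat.add_sub_cancel_left]
            apply hz
            simp only [hS', Finset.mem_image, Finset.mem_erase]
            exact ⟨j+1, ⟨by omega, hj⟩, by omega⟩
      · set S' := S.image (· - 1) with hS'
        have hinj : Set.InjOn (· - 1) S := by
          intro a ha b hb hab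
          have ha0 : a ≠ 0 := fun h => h0 (h ▸ ha)
          have hb0 : b ≠ 0 := fun h => h0 (h ▸ hb)
          simp only at hab; omega
        have hcard : S'.card = k + 2 := by
          rw [hS', Finset.card_image_of_injOn hinj, hSc]
        have hb : ∀ x ∈ S', x < (k+2) + (r+1) := by
          intro x hx
          simp only [hS', Finset.mem_image] at hx
          obtain ⟨a, haS, hax⟩ := hx
          have h1 := hSb a haS
          have h2 : a ≠ 0 := fun h => h0 (h ▸ haS)
          omega
        obtain ⟨i, hilt, hz⟩ := ih ((k+2) + (r+1)) (by omega) (k+2) (r+1) rfl (by omega)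
          (by omega) S' hb hcard
        rw [show (k+2)+(r+1) = k+r+3 by omega] at hilt
        refine ⟨i, by rw [htot]; omega, ?_⟩
        intro j hj
        have hj0 : j ≠ 0 := fun h => h0 (h ▸ hj)
        match j with
        | j+1 =>
            rw [Hmat]
            simp only [Nat.add_sub_cancel, if_neg (by omega : ¬ j + 1 = 0), if_pos hilt]
            apply hz
            simp only [hS', Finset.mem_image]
            exact ⟨j+1, hj, by omega⟩

/-- The recursively constructed matrix `H^(k,r)` (which has `C(k+r,k)` rows and
`k+r` columns by its indexing types) has exactly `k` zeros (equivalently exactly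
`r` ones) in every row, and is BDC(k,r,k+r). -/
theorem stmt2 (k r : ℕ) (hk : 1 ≤ k) (hr : 1 ≤ r) :
    (∀ i : Fin ((k + r).choose k),
        (Finset.univ.filter fun j : Fin (k + r) => Hmat k r i j = false).card = k) ∧
    (∀ i : Fin ((k + r).choose k),
        (Finset.univ.filter fun j : Fin (k + r) => Hmat k r i j = true).card = r) ∧
    IsBDC k r (fun (i : Fin ((k + r).choose k)) (j : Fin (k + r)) => Hmat k r i j) := by
  have hzero : ∀ i : Fin ((k + r).choose k),
      (Finset.univ.filter fun j : Fin (k + r) => Hmat k r i j = false).card = k := by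
    intro i
    rw [fin_filter_card (k+r) (fun j => Hmat k r i.val j = false)]
    exact row_count (k+r) k r rfl hk hr i.val i.isLt
  have hone : ∀ i : Fin ((k + r).choose k),
      (Finset.univ.filter fun j : Fin (k + r) => Hmat k r i j = true).card = r := by
    intro i
    have hsum := Finset.card_filter_add_card_filter_not
      (s := (Finset.univ : Finset (Fin (k+r)))) (p := fun j => Hmat k r i.val j.val = false)
    have heq : (Finset.univ.filter fun j : Fin (k+r) => ¬ Hmat k r i.val j.val = false)
        = Finset.univ.filter fun j : Fin (k+r) => Hmat k r i.val j.val = true := by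
      apply Finset.filter_congr; intro j _; simp
    rw [heq, hzero i, Finset.card_univ, Fintype.card_fin] at hsum
    omega
  -- key covering fact at Fin level
  have hcov : ∀ T : Finset (Fin (k+r)), T.card ≤ k →
      ∃ i : Fin ((k+r).choose k), ∀ j ∈ T, Hmat k r i.val j.val = false := by
    intro T hT
    set T' := T.image Fin.val with hT'
    have hT'sub : T' ⊆ Finset.range (k+r) := by
      intro x hx; simp only [hT', Finset.mem_image] at hx
      obtain ⟨a, _, rfl⟩ := hx; exact Finset.mem_range.mpr a.isLt
    have hT'card : T'.card ≤ k := by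
      rw [hT', Finset.card_image_of_injective _ Fin.val_injective]; exact hT
    obtain ⟨S, hTS, hSsub, hScard⟩ := Finset.exists_subsuperset_card_eq hT'sub hT'card
      (by rw [Finset.card_range]; omega)
    obtain ⟨i, hilt, hz⟩ := cover (k+r) k r rfl hk hr S
      (fun j hj => Finset.mem_range.mp (hSsub hj)) hScard
    refine ⟨⟨i, hilt⟩, ?_⟩
    intro j hj
    exact hz j.val (hTS (by simp [hT']; exact ⟨j, hj, rfl⟩))
  refine ⟨hzero, hone, ?_, ?_, ?_⟩
  · -- no zero column
    intro j
    obtain ⟨S, hSsub, hScard⟩ := Finset.exists_subset_card_eq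
      (s := (Finset.range (k+r)).erase j.val) (n := k)
      (by rw [Finset.card_erase_of_mem (Finset.mem_range.mpr j.isLt), Finset.card_range]; omega)
    obtain ⟨i, hilt, hz⟩ := cover (k+r) k r rfl hk hr S
      (fun x hx => Finset.mem_range.mp (Finset.mem_of_mem_erase (hSsub hx))) hScard
    refine ⟨⟨i, hilt⟩, ?_⟩
    show Hmat k r i j.val = true
    by_contra hfalse
    have hjz : Hmat k r i j.val = false := by
      cases hH : Hmat k r i j.val
      · rfl
      · exact absurd hH hfalse
    have hjS : j.val ∉ S := fun h => (Finset.mem_erase.mp (hSsub h)).1 rfl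
    have hsub : insert j.val S ⊆ (Finset.range (k+r)).filter (fun x => Hmat k r i x = false) := by
      intro x hx
      rcases Finset.mem_insert.mp hx with rfl | hxS
      · exact Finset.mem_filter.mpr ⟨Finset.mem_range.mpr j.isLt, hjz⟩
      · exact Finset.mem_filter.mpr
          ⟨Finset.mem_range.mpr (Finset.mem_range.mp (Finset.mem_of_mem_erase (hSsub hxS))),
            hz x hxS⟩
    have hle := Finset.card_le_card hsub
    rw [Finset.card_insert_of_notMem hjS, hScard,
      row_count (k+r) k r rfl hk hr i hilt] at hle
    omega
  · -- row weight
    intro i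
    rw [hone i]
  · -- no k-sum all ones
    intro T hTne hTc h
    obtain ⟨i, hz⟩ := hcov T hTc
    have := congrFun h i
    simp only [boolSum, decide_eq_true_eq] at this
    obtain ⟨j, hjT, hjt⟩ := this
    rw [hz j hjT] at hjt
    exact absurd hjt (by simp)
end

section
/- For all integers k ≥ 1 and r ≥ 1, if H is an m×(k+r) binary matrix that is BDC(k,r,k+r) with exactly m = C(k+r,k) rows, then the rows of H are pairwise distinct and the multiset of rows of H is exactly the set of all binary vectors of length k+r containing exactly r ones (each such vector appearing exactly once as a row); in particular H is unique up to permutations of its rows. -/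
/-- Any BDC(k,r,k+r) code with exactly `m = C(k+r,k)` rows has pairwise distinct rows,
and its rows are exactly the binary vectors of length `k+r` with exactly `r` ones,
each appearing exactly once; hence the code is unique up to row permutations. -/
theorem stmt3 (k r : ℕ) (hk : 1 ≤ k) (hr : 1 ≤ r)
    (H : Fin ((k + r).choose k) → Fin (k + r) → Bool) (hH : IsBDC k r H) :
    Function.Injective H ∧
    ∀ v : Fin (k + r) → Bool,
      (Finset.univ.filter fun j => v j = true).card = r → ∃! i, H i = v := by
  obtain ⟨hcol, hrw, hsum⟩ := hH
  -- the zero-set of each row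
  set f : Fin ((k+r).choose k) → Finset (Fin (k+r)) :=
    (fun i => Finset.univ.filter fun j => H i j = false) with hf
  have hmemf : ∀ i j, j ∈ f i ↔ H i j = false := by
    intro i j; simp [hf]
  have hcard_le : ∀ i, (f i).card ≤ k := by
    intro i
    have h1 := hrw i
    have h2 : (Finset.univ.filter fun j => H i j = true).card + (f i).card = k+r := by
      have := Finset.card_filter_add_card_filter_not
        (s := (Finset.univ : Finset (Fin (k+r)))) (p := fun j => H i j = true)
      simp only [Finset.card_univ, Fintype.card_fin] at this
      rw [hf]
      convert this using 3
      · simp [Bool.not_eq_true]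
    omega
  have hexists : ∀ T : Finset (Fin (k+r)), T.card = k → ∃ i, f i = T := by
    intro T hT
    have hne : T.Nonempty := Finset.card_pos.mp (by omega)
    have hns := hsum T hne (le_of_eq hT)
    have hex : ∃ i, boolSum H T i ≠ true := by
      by_contra h; push_neg at h; exact hns (funext fun i => h i)
    obtain ⟨i, hi⟩ := hex
    refine ⟨i, (Finset.eq_of_subset_of_card_le ?_ ?_).symm⟩
    · intro j hj
      rw [hmemf]
      simp only [boolSum, ne_eq, decide_eq_true_eq] at hi
      push_neg at hi
      simpa using hi j hj
    · rw [hT]; exact hcard_le i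
  -- the chosen preimage map
  let F : {T : Finset (Fin (k+r)) // T.card = k} → Fin ((k+r).choose k) :=
    fun T => (hexists T.1 T.2).choose
  have hF : ∀ T, f (F T) = T.1 := fun T => (hexists T.1 T.2).choose_spec
  have hFinj : Function.Injective F := by
    intro T₁ T₂ h
    apply Subtype.ext
    rw [← hF T₁, ← hF T₂, h]
  have hcardeq : Fintype.card {T : Finset (Fin (k+r)) // T.card = k}
      = Fintype.card (Fin ((k+r).choose k)) := by
    rw [Fintype.card_finset_len, Fintype.card_fin, Fintype.card_fin]
  have hFbij : Function.Bijective F :=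
    (Fintype.bijective_iff_injective_and_card F).mpr ⟨hFinj, hcardeq⟩
  have hfinj : Function.Injective f := by
    intro i₁ i₂ h
    obtain ⟨T₁, hT₁⟩ := hFbij.2 i₁
    obtain ⟨T₂, hT₂⟩ := hFbij.2 i₂
    have : T₁ = T₂ := by
      apply Subtype.ext
      rw [← hF T₁, ← hF T₂, hT₁, hT₂, h]
    rw [← hT₁, ← hT₂, this]
  have hHinj : Function.Injective H := by
    intro i₁ i₂ h
    apply hfinj
    rw [hf]
    simp only [h]
  refine ⟨hHinj, ?_⟩
  intro v hv
  have hZcard : (Finset.univ.filter fun j => v j = false).card = k := by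
    have h2 := Finset.card_filter_add_card_filter_not
      (s := (Finset.univ : Finset (Fin (k+r)))) (p := fun j => v j = true)
    simp only [Finset.card_univ, Fintype.card_fin] at h2
    have h3 : (Finset.univ.filter fun j => ¬ v j = true)
        = (Finset.univ.filter fun j => v j = false) := by
      simp [Bool.not_eq_true]
    rw [h3, hv] at h2
    omega
  obtain ⟨i, hi⟩ := hexists _ hZcard
  have hHiv : H i = v := by
    funext j
    have hj : H i j = false ↔ v j = false := by
      rw [← hmemf i j, hi]; simp
    cases hHij : H i j with
    | false => exact (hj.mp hHij).symm
    | true =>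
      cases hvj : v j with
      | true => rfl
      | false =>
        exfalso
        rw [hj.mpr hvj] at hHij
        exact Bool.false_ne_true hHij
  exact ⟨i, hHiv, fun i' hi' => hHinj (by rw [hHiv, hi'])⟩
end

section
/- Let k ≥ 1 and let H be an m×n binary matrix with m ≥ 2 such that no Boolean sum of a set of exactly k columns of H equals the all-ones vector. If row i of H contains strictly fewer than k zero entries, then the (m−1)×n matrix obtained from H by deleting row i still has no Boolean sum of a set of exactly k columns equal to the all-ones vector. -/
/-- If an `(m+1) × n` binary matrix with at least two rows has no Boolean sum of a set
of exactly `k` columns equal to the all-ones vector, and row `i` has strictly fewer than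
`k` zeros, then the matrix obtained by deleting row `i` still has no Boolean sum of a
set of exactly `k` columns equal to the all-ones vector. -/
theorem stmt5 (k m n : ℕ) (hk : 1 ≤ k) (hm : 1 ≤ m)
    (H : Fin (m + 1) → Fin n → Bool)
    (hH : ∀ T : Finset (Fin n), T.card = k → boolSum H T ≠ fun _ => true)
    (i : Fin (m + 1))
    (hi : (Finset.univ.filter fun j => H i j = false).card < k) :
    ∀ T : Finset (Fin n), T.card = k →
      boolSum (fun (i' : Fin m) (j : Fin n) => H (i.succAbove i') j) T ≠ fun _ => true := by
  intro T hT hall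
  apply hH T hT
  funext r
  rcases eq_or_ne r i with rfl | hne
  · simp only [boolSum, decide_eq_true_eq]
    by_contra hcon
    push_neg at hcon
    have hsub : T ⊆ Finset.univ.filter fun j => H r j = false := by
      intro j hj
      simp only [Finset.mem_filter, Finset.mem_univ, true_and]
      exact Bool.eq_false_iff.mpr (fun h => hcon j hj h)
    have := Finset.card_le_card hsub
    omega
  · obtain ⟨r', hr'⟩ := Fin.exists_succAbove_eq hne
    have := congrFun hall r'
    simp only [boolSum] at this ⊢
    rw [← hr']
    exact this
end

section
/- For all integers k ≥ 1 and r > 1, the matrix H^(k,r) is BCC(k,r,k+r); consequently (combined with the lower bound m ≥ C(k+r,k) for BDC(k,r,k+r) codes) the minimal number of rows among all BCC(k,r,k+r) codes equals C(k+r,k). -/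
lemma cardA (P : ℕ → Bool) (n : ℕ) :
    ((Finset.range (n+1)).filter fun j => P j = true).card
      = ((Finset.range n).filter fun j => P (j+1) = true).card
        + (if P 0 = true then 1 else 0) := by
  rw [Finset.card_filter, Finset.card_filter, Finset.sum_range_succ']

lemma cardB (S : Finset ℕ) (n : ℕ) (hS : S ⊆ Finset.range (n+1)) :
    ((Finset.range n).filter fun j => j+1 ∈ S).card = (S.erase 0).card := by
  refine Finset.card_bij' (fun a _ => a + 1) (fun b _ => b - 1) ?_ ?_ ?_ ?_
  · intro a ha
    simp only [Finset.mem_filter, Finset.mem_range] at ha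
    simp [Finset.mem_erase, ha.2]
  · intro b hb
    simp only [Finset.mem_erase] at hb
    have hb1 : 1 ≤ b := Nat.one_le_iff_ne_zero.2 hb.1
    have := Finset.mem_range.1 (hS hb.2)
    simp only [Finset.mem_filter, Finset.mem_range]
    constructor
    · omega
    · rw [Nat.sub_add_cancel hb1]; exact hb.2
  · intro a ha; rfl
  · intro b hb
    simp only [Finset.mem_erase] at hb
    have hb1 : 1 ≤ b := Nat.one_le_iff_ne_zero.2 hb.1
    show b - 1 + 1 = b
    omega

lemma hmat_spec : ∀ n k r : ℕ, k + r ≤ n → 1 ≤ k → 1 ≤ r →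
    (∀ i < (k+r).choose k,
      ((Finset.range (k+r)).filter fun j => Hmat k r i j = true).card = r) ∧
    (∀ S : Finset ℕ, S ⊆ Finset.range (k+r) → S.card = r →
      ∃ i < (k+r).choose k, ∀ j < k + r, (Hmat k r i j = true ↔ j ∈ S)) := by
  intro n
  induction n with
  | zero => intro k r h hk hr; omega
  | succ n ih =>
    intro k r hn hk hr
    rcases k with _ | k
    · omega
    rcases r with _ | r
    · omega
    rcases r with _ | r
    · -- case r = 1
      simp only [Nat.zero_add]
      have hc : (k + 1 + 1).choose (k + 1) = k + 1 + 1 := Nat.choose_succ_self_right (k+1)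
      constructor
      · intro i hi
        rw [hc] at hi
        have hfe : ((Finset.range (k + 1 + 1)).filter fun j => Hmat (k+1) 1 i j = true) = {i} := by
          ext j
          simp only [Finset.mem_filter, Finset.mem_range, Finset.mem_singleton, Hmat,
            decide_eq_true_eq]
          omega
        rw [hfe, Finset.card_singleton]
      · intro S hS hcard
        obtain ⟨a, rfl⟩ := Finset.card_eq_one.1 hcard
        have ha : a < k + 1 + 1 := Finset.mem_range.1 (hS (Finset.mem_singleton_self a))
        refine ⟨a, by rw [hc]; omega, ?_⟩
        intro j hj
        simp only [Hmat, decide_eq_true_eq, Finset.mem_singleton]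
        exact ⟨fun h => h.symm, fun h => h.symm⟩
    · rcases k with _ | k
      · -- case k = 1, r+2
        simp only [Nat.zero_add, show r+1+1 = r+2 from rfl]
        obtain ⟨IH1, IH2⟩ := ih 1 (r+1) (by omega) (by omega) (by omega)
        rw [show 1 + (r+1) = r+2 from by omega, Nat.choose_one_right] at IH1 IH2
        rw [show 1 + (r+2) = (r+2)+1 from by omega, Nat.choose_one_right]
        have hm0 : ∀ i, Hmat 1 (r+2) i 0 = decide (i < r+2) := by
          intro i; rw [Hmat]; simp
        have hms : ∀ i j, Hmat 1 (r+2) i (j+1)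
            = if i < r+2 then Hmat 1 (r+1) i j else true := by
          intro i j; rw [Hmat]; simp
        constructor
        · intro i hi
          rw [cardA, hm0]
          by_cases h2 : i < r + 2
          · have he : ((Finset.range (r+2)).filter fun j => Hmat 1 (r+2) i (j+1) = true)
                = ((Finset.range (r+2)).filter fun j => Hmat 1 (r+1) i j = true) := by
              apply Finset.filter_congr
              intro j _
              rw [hms, if_pos h2]
            rw [he, IH1 i h2, if_pos (decide_eq_true h2)]
          · have he : ((Finset.range (r+2)).filter fun j => Hmat 1 (r+2) i (j+1) = true)
                = Finset.range (r+2) := by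
              apply Finset.filter_true_of_mem
              intro j _
              rw [hms, if_neg h2]
            rw [he, Finset.card_range, decide_eq_false h2]
            simp
        · intro S hS hcard
          by_cases h0 : 0 ∈ S
          · have hcard' : ((Finset.range (r+2)).filter fun j => j+1 ∈ S).card = r + 1 := by
              rw [cardB S (r+2) hS, Finset.card_erase_of_mem h0, hcard]
              omega
            obtain ⟨i, hi, hiff⟩ := IH2 _ (Finset.filter_subset _ _) hcard'
            refine ⟨i, by omega, ?_⟩
            intro j hj
            rcases j with _ | j
            · rw [hm0]; simp [hi, h0]
            · have hj2 : j < r + 2 := by omega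
              rw [hms, if_pos hi, hiff j hj2]
              simp only [Finset.mem_filter, Finset.mem_range]
              exact ⟨fun h => h.2, fun h => ⟨hj2, h⟩⟩
          · have hSeq : S = (Finset.range ((r+2)+1)).erase 0 := by
              apply Finset.eq_of_subset_of_card_le
              · intro x hx
                exact Finset.mem_erase.2 ⟨fun hx0 => h0 (hx0 ▸ hx), hS hx⟩
              · rw [Finset.card_erase_of_mem (Finset.mem_range.2 (by omega)),
                  Finset.card_range, hcard]
                omega
            refine ⟨r+2, by omega, ?_⟩
            intro j hj
            rcases j with _ | j
            · rw [hm0]; simp [h0]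
            · rw [hms, if_neg (by omega)]
              simp only [hSeq, Finset.mem_erase, Finset.mem_range, true_iff]
              omega
      · -- case k+2, r+2
        simp only [show k+1+1 = k+2 from rfl, show r+1+1 = r+2 from rfl]
        obtain ⟨IH1a, IH1b⟩ := ih (k+2) (r+1) (by omega) (by omega) (by omega)
        obtain ⟨IH2a, IH2b⟩ := ih (k+1) (r+2) (by omega) (by omega) (by omega)
        rw [show (k+2) + (r+1) = k+r+3 from by omega] at IH1a IH1b
        rw [show (k+1) + (r+2) = k+r+3 from by omega] at IH2a IH2b
        rw [show (k+2) + (r+2) = (k+r+3)+1 from by omega,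
          show ((k+r+3)+1).choose (k+2) = (k+r+3).choose (k+1) + (k+r+3).choose (k+2) from
            Nat.choose_succ_succ' (k+r+3) (k+1)]
        set c := (k+r+3).choose (k+2) with hcdef
        set c' := (k+r+3).choose (k+1) with hc'def
        have hm0 : ∀ i, Hmat (k+2) (r+2) i 0 = decide (i < c) := by
          intro i; rw [Hmat]; simp [hcdef]
        have hms : ∀ i j, Hmat (k+2) (r+2) i (j+1)
            = if i < c then Hmat (k+2) (r+1) i j else Hmat (k+1) (r+2) (i - c) j := by
          intro i j; rw [Hmat]; simp [hcdef]
        constructor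
        · intro i hi
          rw [cardA, hm0]
          by_cases h2 : i < c
          · have he : ((Finset.range (k+r+3)).filter fun j => Hmat (k+2) (r+2) i (j+1) = true)
                = ((Finset.range (k+r+3)).filter fun j => Hmat (k+2) (r+1) i j = true) := by
              apply Finset.filter_congr
              intro j _
              rw [hms, if_pos h2]
            rw [he, IH1a i h2, if_pos (decide_eq_true h2)]
          · have hi' : i - c < c' := by omega
            have he : ((Finset.range (k+r+3)).filter fun j => Hmat (k+2) (r+2) i (j+1) = true)
                = ((Finset.range (k+r+3)).filter fun j => Hmat (k+1) (r+2) (i-c) j = true) := by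
              apply Finset.filter_congr
              intro j _
              rw [hms, if_neg h2]
            rw [he, IH2a _ hi', decide_eq_false h2]
            simp
        · intro S hS hcard
          by_cases h0 : 0 ∈ S
          · have hcard' : ((Finset.range (k+r+3)).filter fun j => j+1 ∈ S).card = r + 1 := by
              rw [cardB S (k+r+3) hS, Finset.card_erase_of_mem h0, hcard]
              omega
            obtain ⟨i, hi, hiff⟩ := IH1b _ (Finset.filter_subset _ _) hcard'
            refine ⟨i, by omega, ?_⟩
            intro j hj
            rcases j with _ | j
            · rw [hm0]; simp [hi, h0]
            · have hj2 : j < k+r+3 := by omega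
              rw [hms, if_pos hi, hiff j hj2]
              simp only [Finset.mem_filter, Finset.mem_range]
              exact ⟨fun h => h.2, fun h => ⟨hj2, h⟩⟩
          · have hcard' : ((Finset.range (k+r+3)).filter fun j => j+1 ∈ S).card = r + 2 := by
              rw [cardB S (k+r+3) hS, Finset.erase_eq_of_notMem h0, hcard]
            obtain ⟨i', hi', hiff⟩ := IH2b _ (Finset.filter_subset _ _) hcard'
            refine ⟨c + i', by omega, ?_⟩
            intro j hj
            rcases j with _ | j
            · rw [hm0]
              simp [show ¬ (c + i' < c) from by omega, h0]
            · have hj2 : j < k+r+3 := by omega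
              rw [hms, if_neg (by omega), show c + i' - c = i' from by omega, hiff j hj2]
              simp only [Finset.mem_filter, Finset.mem_range]
              exact ⟨fun h => h.2, fun h => ⟨hj2, h⟩⟩

lemma cardFin (n : ℕ) (P : ℕ → Bool) :
    (Finset.univ.filter fun j : Fin n => P j.val = true).card
      = ((Finset.range n).filter fun j => P j = true).card := by
  rw [Finset.card_filter, Finset.card_filter]
  exact Fin.sum_univ_eq_sum_range (fun j => if P j = true then 1 else 0) n

/-- For `k ≥ 1` and `r > 1`, the matrix `H^(k,r)` is BCC(k,r,k+r); consequently
(combined with the lower bound `m ≥ C(k+r,k)` for BDC(k,r,k+r) codes) the minimal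
number of rows among all BCC(k,r,k+r) codes equals `C(k+r,k)`. -/
theorem stmt8 (k r : ℕ) (hk : 1 ≤ k) (hr : 1 < r) :
    IsBCC k r (fun (i : Fin ((k + r).choose k)) (j : Fin (k + r)) => Hmat k r i j) ∧
    IsLeast {m : ℕ | ∃ H : Fin m → Fin (k + r) → Bool, IsBCC k r H} ((k + r).choose k) := by
  classical
  have hr1 : 1 ≤ r := le_of_lt hr
  obtain ⟨P1, P2⟩ := hmat_spec (k+r) k r le_rfl hk hr1
  have exrow : ∀ S : Finset (Fin (k+r)), S.card = r →
      ∃ i : Fin ((k+r).choose k), ∀ j : Fin (k+r), (Hmat k r i.val j.val = true ↔ j ∈ S) := by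
    intro S hScard
    have hsub : S.image Fin.val ⊆ Finset.range (k+r) := by
      intro x hx
      obtain ⟨a, _, rfl⟩ := Finset.mem_image.1 hx
      exact Finset.mem_range.2 a.isLt
    have hcard : (S.image Fin.val).card = r := by
      rw [Finset.card_image_of_injective S Fin.val_injective, hScard]
    obtain ⟨i0, hi0, hiff⟩ := P2 _ hsub hcard
    refine ⟨⟨i0, hi0⟩, fun j => ?_⟩
    rw [hiff j.val j.isLt]
    constructor
    · intro h
      obtain ⟨a, ha, hav⟩ := Finset.mem_image.1 h
      exact (Fin.val_injective hav) ▸ ha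
    · intro h
      exact Finset.mem_image.2 ⟨j, h, rfl⟩
  have exrow_sup : ∀ D : Finset (Fin (k+r)), D.card ≤ r →
      ∃ i : Fin ((k+r).choose k), ∀ j ∈ D, Hmat k r i.val j.val = true := by
    intro D hD
    obtain ⟨S, hDS, -, hScard⟩ := Finset.exists_subsuperset_card_eq (Finset.subset_univ D) hD
      (by simp only [Finset.card_univ, Fintype.card_fin]; omega)
    obtain ⟨i, hiff⟩ := exrow S hScard
    exact ⟨i, fun j hj => (hiff j).2 (hDS hj)⟩
  have hBCC : IsBCC k r (fun (i : Fin ((k + r).choose k)) (j : Fin (k + r)) => Hmat k r i j) := by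
    refine ⟨⟨?_, ?_, ?_⟩, ?_⟩
    · -- no zero column
      intro j
      obtain ⟨i, hi⟩ := exrow_sup {j} (by rw [Finset.card_singleton]; omega)
      exact ⟨i, hi j (Finset.mem_singleton_self j)⟩
    · -- row weight
      intro i
      have hb := cardFin (k+r) (fun x => Hmat k r i.val x)
      calc r = ((Finset.range (k+r)).filter fun j => Hmat k r i.val j = true).card :=
              (P1 i.val i.isLt).symm
        _ = (Finset.univ.filter fun j : Fin (k+r) => Hmat k r i.val j.val = true).card :=
              hb.symm
        _ ≤ _ := le_of_eq rfl
    · -- no k̄-sum equals all-ones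
      intro T hT hTk heq
      have hcompl : r ≤ Tᶜ.card := by
        rw [Finset.card_compl]
        simp only [Fintype.card_fin]
        omega
      obtain ⟨S, hST, hScard⟩ := Finset.exists_subset_card_eq (s := Tᶜ) (n := r) hcompl
      obtain ⟨i, hiff⟩ := exrow S hScard
      have hc := congrFun heq i
      simp only [boolSum, decide_eq_true_eq] at hc
      obtain ⟨j, hjT, hj⟩ := hc
      exact (Finset.mem_compl.1 (hST ((hiff j).1 hj))) hjT
    · -- XOR of two k̄-sums is never all-ones
      intro T1 T2 h1 h1k h2 h2k heq
      obtain ⟨j1, hj1⟩ := h1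
      obtain ⟨j2, hj2⟩ := h2
      have hD : ({j1, j2} : Finset (Fin (k+r))).card ≤ r := by
        have h := Finset.card_insert_le j1 ({j2} : Finset (Fin (k+r)))
        rw [Finset.card_singleton] at h
        omega
      obtain ⟨i, hall⟩ := exrow_sup {j1, j2} hD
      have hc := congrFun heq i
      have e1 : boolSum (fun (i : Fin ((k + r).choose k)) (j : Fin (k + r)) => Hmat k r i j)
          T1 i = true := by
        simp only [boolSum, decide_eq_true_eq]
        exact ⟨j1, hj1, hall j1 (by simp)⟩
      have e2 : boolSum (fun (i : Fin ((k + r).choose k)) (j : Fin (k + r)) => Hmat k r i j)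
          T2 i = true := by
        simp only [boolSum, decide_eq_true_eq]
        exact ⟨j2, hj2, hall j2 (by simp)⟩
      simp only [e1, e2] at hc
      simp at hc
  refine ⟨hBCC, ⟨⟨_, hBCC⟩, ?_⟩⟩
  rintro m ⟨H, ⟨⟨hcol, hweight, hdet⟩, hcorr⟩⟩
  have hzero : ∀ T : Finset (Fin (k+r)), T.card = k → ∃ i : Fin m, ∀ j ∈ T, H i j = false := by
    intro T hTcard
    have hTne : T.Nonempty := Finset.card_pos.1 (by omega)
    have hd := hdet T hTne (le_of_eq hTcard)
    by_contra hcon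
    push_neg at hcon
    apply hd
    funext i
    obtain ⟨j, hjT, hj⟩ := hcon i
    simp only [boolSum, decide_eq_true_eq]
    exact ⟨j, hjT, by simpa using hj⟩
  obtain ⟨T0, -, hT0⟩ := Finset.exists_subset_card_eq (s := (Finset.univ : Finset (Fin (k+r)))) (n := k)
    (by simp only [Finset.card_univ, Fintype.card_fin]; omega)
  obtain ⟨i0, -⟩ := hzero T0 hT0
  set f : Finset (Fin (k+r)) → Fin m :=
    fun T => if h : ∃ i : Fin m, ∀ j ∈ T, H i j = false then h.choose else i0 with hf
  have hfT : ∀ T : Finset (Fin (k+r)), T.card = k → ∀ j ∈ T, H (f T) j = false := by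
    intro T hTcard
    have hex := hzero T hTcard
    rw [hf]
    simp only [dif_pos hex]
    exact hex.choose_spec
  have key : ∀ T : Finset (Fin (k+r)), T.card = k →
      T = Finset.univ.filter (fun j => H (f T) j = false) := by
    intro T hTcard
    apply Finset.eq_of_subset_of_card_le
    · intro j hj
      exact Finset.mem_filter.2 ⟨Finset.mem_univ j, hfT T hTcard j hj⟩
    · have hfe : (Finset.univ.filter fun j : Fin (k+r) => H (f T) j = false)
          = Finset.univ \ (Finset.univ.filter fun j : Fin (k+r) => H (f T) j = true) := by
        rw [← Finset.filter_not]
        apply Finset.filter_congr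
        intro j _
        simp
      rw [hfe, Finset.card_sdiff_of_subset (Finset.filter_subset _ _), Finset.card_univ, Fintype.card_fin]
      have := hweight (f T)
      omega
  have hinj : Set.InjOn f (Finset.powersetCard k (Finset.univ : Finset (Fin (k+r)))) := by
    intro T1 hT1 T2 hT2 hfeq
    rw [Finset.mem_coe, Finset.mem_powersetCard] at hT1 hT2
    rw [key T1 hT1.2, key T2 hT2.2, hfeq]
  have hle := Finset.card_le_card_of_injOn f
    (fun T _ => Finset.mem_univ (f T)) hinj
  rw [Finset.card_powersetCard, Finset.card_univ, Fintype.card_fin, Finset.card_univ,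
    Fintype.card_fin] at hle
  exact hle
end

section
/- For every integer k ≥ 1: (i) every m×(k+1) binary matrix that is BCC(k,1,k+1) has m ≥ k+2 rows, and (ii) the (k+2)×(k+1) matrix obtained by prepending an all-ones row to the (k+1)×(k+1) identity matrix I_{k+1} is BCC(k,1,k+1); hence the minimal number of rows among BCC(k,1,k+1) codes is k+2. -/
/-- Lower bound: any BCC(k,1,k+1) code has at least k+2 rows. -/
lemma bcc_lower (k : ℕ) (hk : 1 ≤ k) (m : ℕ) (H : Fin m → Fin (k + 1) → Bool)
    (hH : IsBCC k 1 H) : k + 2 ≤ m := by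
  obtain ⟨⟨hcol, hrw, hsum⟩, hxor⟩ := hH
  -- For every column j there is a row equal to the indicator of j.
  have key : ∀ j : Fin (k + 1), ∃ i : Fin m, ∀ j', H i j' = decide (j = j') := by
    intro j
    have hT : (Finset.univ.erase j).card = k := by
      rw [Finset.card_erase_of_mem (Finset.mem_univ j)]
      simp
    have hTne : (Finset.univ.erase j).Nonempty := by
      rw [← Finset.card_pos, hT]; omega
    have hs := hsum _ hTne (le_of_eq hT)
    have hex : ∃ i, boolSum H (Finset.univ.erase j) i = false := by
      by_contra h
      push_neg at h
      apply hs
      funext i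
      cases hb : boolSum H (Finset.univ.erase j) i with
      | false => exact absurd hb (h i)
      | true => rfl
    obtain ⟨i, hi⟩ := hex
    have hzero : ∀ j', j' ≠ j → H i j' = false := by
      intro j' hj'
      have hno : ¬ (∃ j'' ∈ Finset.univ.erase j, H i j'' = true) := by
        simpa [boolSum] using hi
      cases hb : H i j' with
      | false => rfl
      | true =>
        exact absurd ⟨j', Finset.mem_erase.2 ⟨hj', Finset.mem_univ _⟩, hb⟩ hno
    have hone : H i j = true := by
      have h1 : 0 < (Finset.univ.filter fun j' => H i j' = true).card :=
        lt_of_lt_of_le one_pos (hrw i)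
      obtain ⟨j', hj'⟩ := Finset.card_pos.mp h1
      rw [Finset.mem_filter] at hj'
      by_cases h : j' = j
      · rw [← h]; exact hj'.2
      · exact absurd (hzero j' h) (by simp [hj'.2])
    refine ⟨i, fun j' => ?_⟩
    by_cases h : j = j'
    · subst h; simp [hone]
    · simp [h, hzero j' (Ne.symm h)]
  choose f hf using key
  have hfinj : Function.Injective f := by
    intro j₁ j₂ h
    have h1 : (decide (j₂ = j₁) : Bool) = decide (j₁ = j₁) := by
      rw [← hf j₂ j₁, ← h, hf j₁ j₁]
    have h2 : j₂ = j₁ := by simpa using h1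
    exact h2.symm
  have hle : k + 1 ≤ m := by
    have := Fintype.card_le_of_injective f hfinj
    simpa using this
  by_contra hm
  push_neg at hm
  have hmeq : m = k + 1 := by omega
  subst hmeq
  have hfsurj : Function.Surjective f := Finite.surjective_of_injective hfinj
  have hc1 : ({0} : Finset (Fin (k + 1))).card ≤ k := by simp; omega
  have hT : (Finset.univ.erase (0 : Fin (k + 1))).card = k := by
    rw [Finset.card_erase_of_mem (Finset.mem_univ _)]; simp
  have hTne : (Finset.univ.erase (0 : Fin (k + 1))).Nonempty := by
    rw [← Finset.card_pos, hT]; omega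
  apply hxor {0} (Finset.univ.erase 0) ⟨0, Finset.mem_singleton_self 0⟩ hc1 hTne
    (le_of_eq hT)
  funext i
  obtain ⟨j, rfl⟩ := hfsurj i
  by_cases hj : j = 0
  · simp [boolSum, hf, hj]
  · simp only [boolSum, hf]
    have h1 : ¬ (∃ j' ∈ ({0} : Finset (Fin (k + 1))), (decide (j = j') : Bool) = true) := by
      simp [hj]
    have h2 : ∃ j' ∈ Finset.univ.erase (0 : Fin (k + 1)), (decide (j = j') : Bool) = true := by
      exact ⟨j, Finset.mem_erase.2 ⟨hj, Finset.mem_univ _⟩, by simp⟩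
    simp [h1, h2]

/-- The (k+2)×(k+1) ones-row-over-identity matrix is BCC(k,1,k+1). -/
lemma bcc_example (k : ℕ) (hk : 1 ≤ k) :
    IsBCC k 1
      (Fin.cons (fun _ => true) (fun i j : Fin (k + 1) => decide (i = j)) :
        Fin (k + 2) → Fin (k + 1) → Bool) := by
  set Hc : Fin (k + 2) → Fin (k + 1) → Bool :=
    Fin.cons (fun _ => true) (fun i j : Fin (k + 1) => decide (i = j)) with hHc
  have h0 : ∀ j, Hc 0 j = true := fun j => by simp [hHc]
  have hs : ∀ (i : Fin (k + 1)) (j), Hc i.succ j = decide (i = j) := fun i j => by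
    simp [hHc]
  refine ⟨⟨fun j => ⟨0, h0 j⟩, fun i => ?_, ?_⟩, ?_⟩
  · -- row weight 1
    refine Fin.cases ?_ ?_ i
    · rw [Nat.succ_le_iff, Finset.card_pos]
      exact ⟨0, Finset.mem_filter.2 ⟨Finset.mem_univ _, h0 0⟩⟩
    · intro i'
      rw [Nat.succ_le_iff, Finset.card_pos]
      exact ⟨i', Finset.mem_filter.2 ⟨Finset.mem_univ _, by simp [hs]⟩⟩
  · -- no k̄-sum is all ones
    intro T hTne hTc heq
    have hTnu : T ≠ Finset.univ := by
      intro h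
      rw [h, Finset.card_fin] at hTc
      omega
    obtain ⟨j, hj⟩ : ∃ j, j ∉ T := by
      by_contra h; push_neg at h
      exact hTnu (Finset.eq_univ_of_forall h)
    have := congrFun heq j.succ
    simp only [boolSum, hs, decide_eq_true_eq] at this
    obtain ⟨j', hj', rfl⟩ := this
    exact hj hj'
  · -- xor condition
    intro T₁ T₂ h1 _ h2 _ heq
    have := congrFun heq 0
    obtain ⟨j₁, hj₁⟩ := h1
    obtain ⟨j₂, hj₂⟩ := h2
    have e1 : boolSum Hc T₁ 0 = true := decide_eq_true ⟨j₁, hj₁, h0 j₁⟩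
    have e2 : boolSum Hc T₂ 0 = true := decide_eq_true ⟨j₂, hj₂, h0 j₂⟩
    rw [e1, e2] at this
    simp at this

/-- (i) Every `m × (k+1)` binary matrix that is BCC(k,1,k+1) has `m ≥ k+2` rows, and
(ii) prepending an all-ones row to the `(k+1) × (k+1)` identity matrix yields a
`(k+2) × (k+1)` matrix that is BCC(k,1,k+1); hence the minimal number of rows among
BCC(k,1,k+1) codes is `k+2`. -/
theorem stmt9 (k : ℕ) (hk : 1 ≤ k) :
    (∀ m : ℕ, ∀ H : Fin m → Fin (k + 1) → Bool, IsBCC k 1 H → k + 2 ≤ m) ∧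
    IsBCC k 1
      (Fin.cons (fun _ => true) (fun i j : Fin (k + 1) => decide (i = j)) :
        Fin (k + 2) → Fin (k + 1) → Bool) ∧
    IsLeast {m : ℕ | ∃ H : Fin m → Fin (k + 1) → Bool, IsBCC k 1 H} (k + 2) := by
  refine ⟨fun m H hH => bcc_lower k hk m H hH, bcc_example k hk, ⟨?_, ?_⟩⟩
  · exact ⟨_, bcc_example k hk⟩
  · rintro m ⟨H, hH⟩
    exact bcc_lower k hk m H hH
end

section
/- Let H be an m×n binary matrix in which every column contains strictly more ones than zeros. Then for any two nonempty sets T₁ and T₂ of columns of H, the entrywise XOR of the Boolean sum over T₁ and the Boolean sum over T₂ is not the all-ones vector. -/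
/-- If every column of `H` contains strictly more ones than zeros, then for any two
nonempty sets of columns, the entrywise XOR of their Boolean sums is not the all-ones
vector. -/
theorem stmt11 (m n : ℕ) (H : Fin m → Fin n → Bool)
    (h : ∀ j, (Finset.univ.filter fun i => H i j = false).card <
              (Finset.univ.filter fun i => H i j = true).card) :
    ∀ T₁ T₂ : Finset (Fin n), T₁.Nonempty → T₂.Nonempty →
      (fun i => xor (boolSum H T₁ i) (boolSum H T₂ i)) ≠ fun _ => true := by

  rintro T₁ T₂ ⟨j₁, hj₁⟩ ⟨j₂, hj₂⟩ heq
  have key : ∀ i j₁' j₂', j₁' ∈ T₁ → j₂' ∈ T₂ → H i j₁' = true → H i j₂' = false := by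
    intro i a b ha hb hia
    have h1 : boolSum H T₁ i = true := by
      simp [boolSum]; exact ⟨a, ha, hia⟩
    have hx : xor (boolSum H T₁ i) (boolSum H T₂ i) = true := congrFun heq i
    have h2 : boolSum H T₂ i = false := by
      rw [h1] at hx; simpa using hx
    simp only [boolSum, decide_eq_false_iff_not] at h2
    push_neg at h2
    exact Bool.eq_false_iff.mpr (h2 b hb)
  have key' : ∀ i j₂' j₁', j₂' ∈ T₂ → j₁' ∈ T₁ → H i j₂' = true → H i j₁' = false := by
    intro i a b ha hb hia
    have h1 : boolSum H T₂ i = true := by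
      simp [boolSum]; exact ⟨a, ha, hia⟩
    have hx : xor (boolSum H T₁ i) (boolSum H T₂ i) = true := congrFun heq i
    have h2 : boolSum H T₁ i = false := by
      rw [h1] at hx; simpa using hx
    simp only [boolSum, decide_eq_false_iff_not] at h2
    push_neg at h2
    exact Bool.eq_false_iff.mpr (h2 b hb)
  have s1 : (Finset.univ.filter fun i => H i j₁ = true).card ≤
      (Finset.univ.filter fun i => H i j₂ = false).card := by
    apply Finset.card_le_card
    intro i hi
    simp only [Finset.mem_filter, Finset.mem_univ, true_and] at hi ⊢
    exact key i j₁ j₂ hj₁ hj₂ hi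
  have s2 : (Finset.univ.filter fun i => H i j₂ = true).card ≤
      (Finset.univ.filter fun i => H i j₁ = false).card := by
    apply Finset.card_le_card
    intro i hi
    simp only [Finset.mem_filter, Finset.mem_univ, true_and] at hi ⊢
    exact key' i j₂ j₁ hj₂ hj₁ hi
  have := (h j₁).trans_le s1
  have := (h j₂).trans_le s2
  omega
end

section
/- Let k ≥ 1, r ≥ 1, r₀ ≥ 1, p ≥ 1 be integers with p·r₀ ≥ r. Let H be an m×n₀ binary matrix that is BCC(k,r₀,n₀), and let f : {1,…,n} → {1,…,n₀} be a map such that every index in {1,…,n₀} has at least p preimages under f. Then the m×n binary matrix H' whose j-th column equals the f(j)-th column of H is BCC(k,r,n). (This is the column-duplication construction of general backdoor correction codes from minimal ones.) -/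
lemma boolSum_comp {m n₀ n : ℕ} (H : Fin m → Fin n₀ → Bool) (f : Fin n → Fin n₀)
    (T : Finset (Fin n)) :
    boolSum (fun i j => H i (f j)) T = boolSum H (T.image f) := by
  funext i
  simp only [boolSum, Finset.mem_image, decide_eq_decide]
  constructor
  · rintro ⟨j, hj, h⟩; exact ⟨f j, ⟨j, hj, rfl⟩, h⟩
  · rintro ⟨j₀, ⟨j, hj, rfl⟩, h⟩; exact ⟨j, hj, h⟩

/-- Column duplication: if `H` is BCC(k,r₀,n₀) and `f : Fin n → Fin n₀` is such that
every column index of `H` has at least `p` preimages, with `p·r₀ ≥ r`, then the matrix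
whose `j`-th column is the `f j`-th column of `H` is BCC(k,r,n). -/
theorem stmt13 (k r r₀ p m n₀ n : ℕ) (hk : 1 ≤ k) (hr : 1 ≤ r) (hr₀ : 1 ≤ r₀)
    (hp : 1 ≤ p) (hpr : r ≤ p * r₀)
    (H : Fin m → Fin n₀ → Bool) (hH : IsBCC k r₀ H)
    (f : Fin n → Fin n₀)
    (hf : ∀ j₀ : Fin n₀, p ≤ (Finset.univ.filter fun j => f j = j₀).card) :
    IsBCC k r (fun (i : Fin m) (j : Fin n) => H i (f j)) := by
  obtain ⟨⟨hcol, hrow, hsum⟩, hxor⟩ := hH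
  have himg : ∀ T : Finset (Fin n), T.Nonempty → T.card ≤ k →
      (T.image f).Nonempty ∧ (T.image f).card ≤ k := fun T hne hc =>
    ⟨hne.image f, le_trans (Finset.card_image_le) hc⟩
  refine ⟨⟨?_, ?_, ?_⟩, ?_⟩
  · intro j; exact hcol (f j)
  · intro i
    set S : Finset (Fin n₀) := Finset.univ.filter fun j₀ => H i j₀ = true with hS
    have hsub : S.biUnion (fun j₀ => Finset.univ.filter fun j => f j = j₀) ⊆
        Finset.univ.filter fun j => H i (f j) = true := by
      intro j hj
      simp only [Finset.mem_biUnion, Finset.mem_filter, Finset.mem_univ, true_and, hS] at hj ⊢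
      obtain ⟨j₀, hj₀, hfj⟩ := hj
      rw [hfj]; exact hj₀
    have hdisj : ∀ x ∈ S, ∀ y ∈ S, x ≠ y →
        Disjoint (Finset.univ.filter fun j => f j = x)
          (Finset.univ.filter fun j => f j = y) := by
      intro x _ y _ hxy
      rw [Finset.disjoint_left]
      intro a ha hb
      simp only [Finset.mem_filter, Finset.mem_univ, true_and] at ha hb
      exact hxy (ha ▸ hb ▸ rfl)
    calc r ≤ p * r₀ := hpr
      _ ≤ p * S.card := Nat.mul_le_mul_left p (hrow i)
      _ = ∑ j₀ ∈ S, p := by rw [Finset.sum_const, smul_eq_mul, Nat.mul_comm]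
      _ ≤ ∑ j₀ ∈ S, (Finset.univ.filter fun j => f j = j₀).card :=
          Finset.sum_le_sum fun j₀ _ => hf j₀
      _ = (S.biUnion (fun j₀ => Finset.univ.filter fun j => f j = j₀)).card :=
          (Finset.card_biUnion hdisj).symm
      _ ≤ _ := Finset.card_le_card hsub
  · intro T hne hc
    obtain ⟨h1, h2⟩ := himg T hne hc
    rw [boolSum_comp]
    exact hsum _ h1 h2
  · intro T₁ T₂ h1n h1c h2n h2c
    obtain ⟨h1, h2⟩ := himg T₁ h1n h1c
    obtain ⟨h3, h4⟩ := himg T₂ h2n h2c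
    simp only [boolSum_comp]
    exact hxor _ _ h1 h2 h3 h4
end

section
/- Let k ≥ 1, r ≥ 1. Let H₁ be an m₁×n binary matrix that is BCC(k,r,n), and let H₂ be an m₂×n binary matrix that is k̄-separable and has row weight r. Then the (m₁+m₂)×n binary matrix H obtained by stacking H₁ on top of H₂ is BTC(k,r,n). -/
/-- Stacking a BCC(k,r,n) code on top of a `k̄`-separable matrix of row weight `r`
yields a BTC(k,r,n) code. -/
theorem stmt14 (k r m₁ m₂ n : ℕ) (hk : 1 ≤ k) (hr : 1 ≤ r)
    (H₁ : Fin m₁ → Fin n → Bool) (H₂ : Fin m₂ → Fin n → Bool)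
    (h₁ : IsBCC k r H₁) (h₂sep : IsKSeparable k H₂) (h₂w : HasRowWeight H₂ r) :
    IsBTC k r (fun (i : Fin (m₁ + m₂)) (j : Fin n) =>
      Fin.addCases (fun i₁ => H₁ i₁ j) (fun i₂ => H₂ i₂ j) i) := by
  set H : Fin (m₁ + m₂) → Fin n → Bool := fun i j =>
    Fin.addCases (fun i₁ => H₁ i₁ j) (fun i₂ => H₂ i₂ j) i with hH
  have hleft : ∀ (i : Fin m₁) (j : Fin n), H (Fin.castAdd m₂ i) j = H₁ i j := by
    intro i j; simp [hH]
  have hright : ∀ (i : Fin m₂) (j : Fin n), H (Fin.natAdd m₁ i) j = H₂ i j := by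
    intro i j; simp [hH]
  have hbl : ∀ (T : Finset (Fin n)) (i : Fin m₁),
      boolSum H T (Fin.castAdd m₂ i) = boolSum H₁ T i := by
    intro T i; simp [boolSum, hleft]
  have hbr : ∀ (T : Finset (Fin n)) (i : Fin m₂),
      boolSum H T (Fin.natAdd m₁ i) = boolSum H₂ T i := by
    intro T i; simp [boolSum, hright]
  obtain ⟨⟨hcol, hrw, hsum⟩, hxor⟩ := h₁
  refine ⟨⟨⟨?_, ?_, ?_⟩, ?_⟩, ?_⟩
  · intro j
    obtain ⟨i, hi⟩ := hcol j
    exact ⟨Fin.castAdd m₂ i, by rw [hleft]; exact hi⟩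
  · intro i
    refine Fin.addCases (fun i₁ => ?_) (fun i₂ => ?_) i
    · simpa [hleft] using hrw i₁
    · simpa [hright] using h₂w i₂
  · intro T hT1 hTk h
    apply hsum T hT1 hTk
    funext i
    rw [← hbl T i]
    exact congrFun h _
  · intro T₁ T₂ h1 h1k h2 h2k h
    apply hxor T₁ T₂ h1 h1k h2 h2k
    funext i
    rw [← hbl T₁ i, ← hbl T₂ i]
    exact congrFun h _
  · intro T₁ T₂ h1 h1k h2 h2k h
    apply h₂sep T₁ T₂ h1 h1k h2 h2k
    funext i
    have := congrFun h (Fin.natAdd m₁ i)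
    rwa [hbr, hbr] at this
end

section
/- Let k ≥ 1, r ≥ 1 and let H be an m×n binary matrix that is BCC(k,r,n), with m ≥ 1. Then for all sets S₁, S₂ ⊆ {1,…,n} with |S₁| ≤ k and |S₂| ≤ k (both possibly empty), y(S₁,0) ≠ y(S₂,1). Consequently, under at most k attackers, the true label b is uniquely determined by the output vector y(S,b). -/
/-- The output vector `y(S,b)`: model `i` outputs the attack target `!b` if it is
trained on some attacker in `S`, and the true label `b` otherwise. -/
def outputVec {m n : ℕ} (H : Fin m → Fin n → Bool) (S : Finset (Fin n)) (b : Bool) :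
    Fin m → Bool :=
  fun i => if ∃ j ∈ S, H i j = true then !b else b

/-- If `H` is BCC(k,r,n) with at least one row, then for any two attacker sets of size
at most `k` (possibly empty), the output vector with true label `0` never coincides with
an output vector with true label `1`; consequently, under at most `k` attackers the true
label is uniquely determined by the output vector. -/
theorem stmt15 (k r m n : ℕ) (hk : 1 ≤ k) (hr : 1 ≤ r) (hm : 1 ≤ m)
    (H : Fin m → Fin n → Bool) (hH : IsBCC k r H) :
    (∀ S₁ S₂ : Finset (Fin n), S₁.card ≤ k → S₂.card ≤ k →
        outputVec H S₁ false ≠ outputVec H S₂ true) ∧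
    (∀ S₁ S₂ : Finset (Fin n), S₁.card ≤ k → S₂.card ≤ k → ∀ b₁ b₂ : Bool,
        outputVec H S₁ b₁ = outputVec H S₂ b₂ → b₁ = b₂) := by

  have h0 := hH.1.2.2
  have hx := hH.2
  have main : ∀ S₁ S₂ : Finset (Fin n), S₁.card ≤ k → S₂.card ≤ k →
      outputVec H S₁ false ≠ outputVec H S₂ true := by
    intro S₁ S₂ h1 h2 heq
    have heq' : ∀ i, boolSum H S₁ i = !(boolSum H S₂ i) := by
      intro i
      have h := congrFun heq i
      simp only [outputVec, boolSum, Bool.not_false, Bool.not_true] at h ⊢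
      by_cases p1 : ∃ j ∈ S₁, H i j = true <;> by_cases p2 : ∃ j ∈ S₂, H i j = true <;>
        simp_all
    rcases S₁.eq_empty_or_nonempty with rfl | hS₁
    · rcases S₂.eq_empty_or_nonempty with rfl | hS₂
      · have := heq' ⟨0, hm⟩
        simp [boolSum] at this
      · apply h0 S₂ hS₂ h2
        funext i
        have := heq' i
        simp only [boolSum] at this ⊢
        simp at this
        by_cases p2 : ∃ j ∈ S₂, H i j = true <;> simp_all
    · rcases S₂.eq_empty_or_nonempty with rfl | hS₂
      · apply h0 S₁ hS₁ h1
        funext i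
        have := heq' i
        simp only [boolSum] at this ⊢
        simp_all
      · apply hx S₁ S₂ hS₁ h1 hS₂ h2
        funext i
        have := heq' i
        cases hb : boolSum H S₂ i <;> simp_all
  refine ⟨main, ?_⟩
  intro S₁ S₂ h1 h2 b₁ b₂ heq
  cases b₁ <;> cases b₂
  · rfl
  · exact absurd heq (main S₁ S₂ h1 h2)
  · exact absurd heq.symm (main S₂ S₁ h2 h1)
  · rfl
end

section
/- Let k ≥ 1, r ≥ 1 and let H be an m×n binary matrix that is BTC(k,r,n), with m ≥ 1. Then the map (S,b) ↦ y(S,b) is injective over all pairs of a set S ⊆ {1,…,n} with |S| ≤ k (possibly empty) and a label b ∈ {0,1}: if y(S₁,b₁) = y(S₂,b₂) then S₁ = S₂ and b₁ = b₂. Consequently, the output vector uniquely determines both the true label and the set of attackers. -/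
/-- If `H` is BTC(k,r,n) with at least one row, then the map `(S, b) ↦ y(S, b)` is
injective over attacker sets `S` of size at most `k` (possibly empty) and labels `b`:
the output vector uniquely determines both the true label and the set of attackers. -/
theorem stmt16 (k r m n : ℕ) (hk : 1 ≤ k) (hr : 1 ≤ r) (hm : 1 ≤ m)
    (H : Fin m → Fin n → Bool) (hH : IsBTC k r H) :
    ∀ S₁ S₂ : Finset (Fin n), S₁.card ≤ k → S₂.card ≤ k → ∀ b₁ b₂ : Bool,
      outputVec H S₁ b₁ = outputVec H S₂ b₂ → S₁ = S₂ ∧ b₁ = b₂ := by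
  obtain ⟨⟨⟨hcol, hrow, hbdc⟩, hbcc⟩, hsep⟩ := hH
  intro S₁ S₂ h₁ h₂ b₁ b₂ heq
  have heq' : ∀ i, outputVec H S₁ b₁ i = outputVec H S₂ b₂ i := fun i => congrFun heq i
  simp only [outputVec] at heq'
  have hne : ∀ S : Finset (Fin n), S.Nonempty → ∃ i, ∃ j ∈ S, H i j = true := by
    rintro S ⟨j, hj⟩
    obtain ⟨i, hi⟩ := hcol j
    exact ⟨i, j, hj, hi⟩
  have hnb : ∀ b : Bool, ¬ (b = !b) := by decide
  have hnb' : ∀ b : Bool, ¬ ((!b) = b) := by decide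
  rcases S₁.eq_empty_or_nonempty with rfl | hS₁ <;>
    rcases S₂.eq_empty_or_nonempty with rfl | hS₂
  · refine ⟨rfl, ?_⟩
    have := heq' ⟨0, hm⟩
    simpa using this
  · exfalso
    simp only [Finset.notMem_empty, false_and, exists_false, if_false] at heq'
    by_cases hb : b₁ = b₂
    · subst hb
      obtain ⟨i, hc⟩ := hne S₂ hS₂
      have := heq' i
      rw [if_pos hc] at this
      exact hnb _ this
    · have hall : ∀ i, ∃ j ∈ S₂, H i j = true := by
        intro i
        by_contra hc
        have := heq' i
        rw [if_neg hc] at this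
        exact hb this
      exact hbdc S₂ hS₂ h₂ (funext fun i => by simp [boolSum, hall i])
  · exfalso
    simp only [Finset.notMem_empty, false_and, exists_false, if_false] at heq'
    by_cases hb : b₁ = b₂
    · subst hb
      obtain ⟨i, hc⟩ := hne S₁ hS₁
      have := heq' i
      rw [if_pos hc] at this
      exact hnb _ this.symm
    · have hall : ∀ i, ∃ j ∈ S₁, H i j = true := by
        intro i
        by_contra hc
        have := heq' i
        rw [if_neg hc] at this
        exact hb this
      exact hbdc S₁ hS₁ h₁ (funext fun i => by simp [boolSum, hall i])
  · by_cases hb : b₁ = b₂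
    · subst hb
      refine ⟨?_, rfl⟩
      apply hsep S₁ S₂ hS₁ h₁ hS₂ h₂
      funext i
      have h := heq' i
      simp only [boolSum]
      apply decide_eq_decide.mpr
      constructor
      · intro hc1
        by_contra hc2
        rw [if_pos hc1, if_neg hc2] at h
        exact hnb' _ h
      · intro hc2
        by_contra hc1
        rw [if_neg hc1, if_pos hc2] at h
        exact hnb _ h
    · exfalso
      have hb2 : b₂ = !b₁ := by cases b₁ <;> cases b₂ <;> simp_all
      subst hb2
      apply hbcc S₁ S₂ hS₁ h₁ hS₂ h₂
      funext i
      have h := heq' i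
      simp only [boolSum]
      by_cases hc1 : ∃ j ∈ S₁, H i j = true <;> by_cases hc2 : ∃ j ∈ S₂, H i j = true
      · rw [if_pos hc1, if_pos hc2, Bool.not_not] at h
        exact absurd h (hnb' _)
      · simp [hc1, hc2]
      · simp [hc1, hc2]
      · rw [if_neg hc1, if_neg hc2] at h
        exact absurd h (hnb _)
end
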